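/- Suppose {(p_j,q_j) : j=1,...,n} spans a Lagrangian subspace, the matrix with rows (q_j, p_j) is in reduced row echelon form, the matrix with rows q_1,...,q_n has rank r ≥ 1, and k is the position of the leading one in row (q_1,p_1), with k ≤ n (so the leading one lies in q_1). Then (e_k, 0), with e_k the k-th standard basis vector, satisfies [(e_k,0),(p_j,q_j)] = 0 for j = 2,...,n but [(e_k,0),(p_1,q_1)] = 1; hence {(e_k,0),(p_2,q_2),...,(p_n,q_n)} spans a Lagrangian subspace, and the matrix with rows 0,q_2,...,q_n has rank r - 1. -/

import Mathlib

open scoped Matrix ComplexConjugate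

/-- Bit vectors of length `n` over `ℤ/2`. -/
abbrev V2 (n : ℕ) := Fin n → ZMod 2

/-- Dot product over `ℤ/2`. -/
def dotZ2 {n : ℕ} (a b : V2 n) : ZMod 2 := ∑ i, a i * b i

/-- The symplectic product on `(ℤ/2)^{2n}`: `[(p₁,q₁),(p₂,q₂)] = p₁·q₂ - p₂·q₁`. -/
def symp {n : ℕ} (x y : V2 n × V2 n) : ZMod 2 := dotZ2 x.1 y.2 - dotZ2 y.1 x.2

/-- The computational basis vector `|z⟩` in `ℂ^{2^n}`. -/
noncomputable def basisVec {n : ℕ} (z : V2 n) : V2 n → ℂ := fun y => if y = z then 1 else 0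

/-- The Pauli operator `W(p,q) = (-i)^{p·q mod 4} Z^p X^q`, where
`Z^p X^q |z⟩ = (-1)^{(z+q)·p} |z+q⟩` (bits of `p·q` lifted to integers). -/
noncomputable def W {n : ℕ} (p q : V2 n) : Matrix (V2 n) (V2 n) ℂ :=
  Matrix.of fun y z =>
    if y = z + q then
      (-Complex.I) ^ ((∑ i, (p i).val * (q i).val) % 4) * (-1 : ℂ) ^ (dotZ2 (z + q) p).val
    else 0
/-- A subspace of `(ℤ/2)^{2n}` is isotropic if the symplectic form vanishes on it. -/
def IsIsotropic {n : ℕ} (L : Submodule (ZMod 2) (V2 n × V2 n)) : Prop :=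
  ∀ x ∈ L, ∀ y ∈ L, symp x y = 0

/-- A Lagrangian subspace: a maximal isotropic subspace of `(ℤ/2)^{2n}`. -/
def IsLagrangian {n : ℕ} (L : Submodule (ZMod 2) (V2 n × V2 n)) : Prop :=
  IsIsotropic L ∧ ∀ L', IsIsotropic L' → L ≤ L' → L' = L

/-!
Pairing with `e = (e_k, 0)` reads off the `k`-th coordinate of the `q`-part, so `e` is orthogonal
to every generator but the first and pairs to `1` with it. Replacing the first generator `v` of a
Lagrangian `L = span (v, S)` by such an `e` keeps it Lagrangian: if `x` is orthogonal to `e` and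
`S`, then `x - [x, v] e` is orthogonal to all of `L`, hence lies in `L` by maximality, and pairing
with `e` shows it has no `v`-component. On the rank side, the pivot column `k` shows that the
first row of `q` is not in the span of the others, so deleting it lowers the rank by one.
-/

open Submodule

section Symplectic

variable {n : ℕ}

lemma dotZ2_eq_dotProduct (a b : V2 n) : dotZ2 a b = a ⬝ᵥ b := rfl

def sympForm (n : ℕ) : LinearMap.BilinForm (ZMod 2) (V2 n × V2 n) :=
  LinearMap.mk₂ (ZMod 2) symp
    (fun x y z => by
      simp only [symp, dotZ2_eq_dotProduct, Prod.fst_add, Prod.snd_add, add_dotProduct,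
        dotProduct_add]
      ring)
    (fun c x y => by
      simp only [symp, dotZ2_eq_dotProduct, Prod.smul_fst, Prod.smul_snd, smul_dotProduct,
        dotProduct_smul, smul_eq_mul, mul_sub])
    (fun x y z => by
      simp only [symp, dotZ2_eq_dotProduct, Prod.fst_add, Prod.snd_add, add_dotProduct,
        dotProduct_add]
      ring)
    (fun c x y => by
      simp only [symp, dotZ2_eq_dotProduct, Prod.smul_fst, Prod.smul_snd, smul_dotProduct,
        dotProduct_smul, smul_eq_mul, mul_sub])

lemma sympForm_apply (x y : V2 n × V2 n) : sympForm n x y = symp x y := rfl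

lemma symp_sub_smul_left (x e y : V2 n × V2 n) (c : ZMod 2) :
    symp (x - c • e) y = symp x y - c * symp e y := by
  simp only [← sympForm_apply, map_sub, map_smul, LinearMap.sub_apply, LinearMap.smul_apply,
    smul_eq_mul]

lemma symp_smul_add_right (e v s : V2 n × V2 n) (a : ZMod 2) :
    symp e (a • v + s) = a * symp e v + symp e s := by
  simp only [← sympForm_apply, map_add, map_smul, smul_eq_mul]

lemma symp_swap (x y : V2 n × V2 n) : symp y x = -symp x y := (neg_sub _ _).symm

lemma symp_self (x : V2 n × V2 n) : symp x x = 0 := sub_self _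

lemma symp_stdBasis_zero_left (k : Fin n) (y : V2 n × V2 n) :
    symp ((fun i => if i = k then 1 else 0 : V2 n), (0 : V2 n)) y = y.2 k := by
  simp [symp, dotZ2, ite_mul]

lemma symp_eq_zero_of_mem_span {S : Set (V2 n × V2 n)} {x y : V2 n × V2 n}
    (hS : ∀ s ∈ S, symp x s = 0) (hy : y ∈ span (ZMod 2) S) : symp x y = 0 :=
  (span_le (p := LinearMap.ker (sympForm n x))).2 hS hy

lemma isIsotropic_span {S : Set (V2 n × V2 n)} (hS : ∀ x ∈ S, ∀ y ∈ S, symp x y = 0) :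
    IsIsotropic (span (ZMod 2) S) := by
  intro x hx y hy
  refine symp_eq_zero_of_mem_span (fun s hs => ?_) hy
  rw [← neg_eq_zero, ← symp_swap]
  exact symp_eq_zero_of_mem_span (hS s hs) hx

lemma IsLagrangian.mem_of_forall_symp_eq_zero {L : Submodule (ZMod 2) (V2 n × V2 n)}
    (hL : IsLagrangian L) {y : V2 n × V2 n} (hy : ∀ l ∈ L, symp y l = 0) : y ∈ L := by
  have hiso : IsIsotropic (span (ZMod 2) (insert y L)) := by
    refine isIsotropic_span ?_
    rintro a (rfl | ha) b (rfl | hb)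
    · exact symp_self _
    · exact hy _ hb
    · rw [symp_swap, hy _ ha, neg_zero]
    · exact hL.1 _ ha _ hb
  rw [← hL.2 _ hiso fun l hl => subset_span (Set.mem_insert_of_mem _ hl)]
  exact subset_span (Set.mem_insert _ _)

theorem IsLagrangian.span_insert_replace {S : Set (V2 n × V2 n)} {v e : V2 n × V2 n}
    (hL : IsLagrangian (span (ZMod 2) (insert v S))) (hev : symp e v = 1)
    (heS : ∀ s ∈ S, symp e s = 0) :
    IsLagrangian (span (ZMod 2) (insert e S)) := by
  have hSS : ∀ s ∈ S, ∀ t ∈ S, symp s t = 0 := fun s hs t ht =>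
    hL.1 s (subset_span (Set.mem_insert_of_mem _ hs)) t (subset_span (Set.mem_insert_of_mem _ ht))
  refine ⟨isIsotropic_span ?_, fun L' hL' hle => le_antisymm (fun x hx => ?_) hle⟩
  · rintro a (rfl | ha) b (rfl | hb)
    · exact symp_self _
    · exact heS _ hb
    · rw [symp_swap, heS _ ha, neg_zero]
    · exact hSS _ ha _ hb
  have heL' : e ∈ L' := hle (subset_span (Set.mem_insert _ _))
  set c := symp x v
  have hyL' : x - c • e ∈ L' := sub_mem hx (smul_mem _ c heL')
  have hyL : x - c • e ∈ span (ZMod 2) (insert v S) := by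
    refine hL.mem_of_forall_symp_eq_zero fun l hl => symp_eq_zero_of_mem_span ?_ hl
    rintro s (rfl | hs)
    · rw [symp_sub_smul_left, hev, mul_one, sub_self]
    · exact hL' _ hyL' s (hle (subset_span (Set.mem_insert_of_mem _ hs)))
  obtain ⟨a, s, hs, hys⟩ := mem_span_insert.1 hyL
  have ha : a = 0 := by
    have hey : symp e (a • v + s) = symp e (x - c • e) := by rw [hys]
    rwa [symp_smul_add_right, hev, mul_one, symp_eq_zero_of_mem_span heS hs, add_zero, symp_swap,
      symp_sub_smul_left, symp_self, mul_zero, sub_zero, hL' x hx e heL', neg_zero] at hey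
  rw [ha, zero_smul, zero_add] at hys
  exact mem_span_insert.2 ⟨c, s, hs, by rw [← hys, add_sub_cancel]⟩

end Symplectic

theorem Matrix.rank_updateRow_zero_add_one {K m ι : Type*} [Field K] [Finite ι] [DecidableEq ι]
    [Fintype m] (A : Matrix ι m K) (i₀ : ι) (k : m) (hpivot : A i₀ k ≠ 0)
    (hcol : ∀ j, j ≠ i₀ → A j k = 0) :
    (A.updateRow i₀ 0).rank + 1 = A.rank := by
  set T := span K (Set.range (A.updateRow i₀ 0).row)
  have hTk : T ≤ LinearMap.ker (LinearMap.proj k) := by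
    refine span_le.2 ?_
    rintro _ ⟨j, rfl⟩
    by_cases hj : j = i₀ <;> simp [Matrix.row, hj, hcol]
  have hspan : span K (Set.range A.row) = T ⊔ span K {A i₀} := by
    refine le_antisymm (span_le.2 ?_) (sup_le (span_le.2 ?_) ?_)
    · rintro _ ⟨j, rfl⟩
      by_cases hj : j = i₀
      · exact mem_sup_right (subset_span (by simp [Matrix.row, hj]))
      · exact mem_sup_left (subset_span ⟨j, by simp [Matrix.row, hj]⟩)
    · rintro _ ⟨j, rfl⟩
      by_cases hj : j = i₀
      · simp [Matrix.row, hj]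
      · exact subset_span ⟨j, by simp [Matrix.row, hj]⟩
    · exact span_le.2 (Set.singleton_subset_iff.2 (subset_span ⟨i₀, rfl⟩))
  rw [Matrix.rank_eq_finrank_span_row, Matrix.rank_eq_finrank_span_row, hspan,
    finrank_sup_span_singleton fun h => hpivot (hTk h)]

theorem splitting_replacement_general {n : ℕ} (hn : 0 < n) (p q : Fin n → V2 n)
    (hLag : IsLagrangian (Submodule.span (ZMod 2) (Set.range fun j => (p j, q j))))
    (k : Fin n) (r : ℕ)
    (hrank : (Matrix.of fun j i => q j i).rank = r)
    (hlead : q ⟨0, hn⟩ k = 1) (hcol : ∀ j, j ≠ ⟨0, hn⟩ → q j k = 0) :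
    (∀ j, j ≠ ⟨0, hn⟩ →
      symp ((fun i => if i = k then 1 else 0 : V2 n), (0 : V2 n)) (p j, q j) = 0) ∧
    symp ((fun i => if i = k then 1 else 0 : V2 n), (0 : V2 n)) (p ⟨0, hn⟩, q ⟨0, hn⟩) = 1 ∧
    IsLagrangian (Submodule.span (ZMod 2)
      (insert ((fun i => if i = k then 1 else 0 : V2 n), (0 : V2 n))
        {x | ∃ j, j ≠ ⟨0, hn⟩ ∧ x = (p j, q j)})) ∧
    (Matrix.of fun j i => if j = ⟨0, hn⟩ then (0 : ZMod 2) else q j i).rank = r - 1 := by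
  set j₀ : Fin n := ⟨0, hn⟩
  have hperp : ∀ j, j ≠ j₀ →
      symp ((fun i => if i = k then 1 else 0 : V2 n), (0 : V2 n)) (p j, q j) = 0 :=
    fun j hj => by rw [symp_stdBasis_zero_left]; exact hcol j hj
  have hpair : symp ((fun i => if i = k then 1 else 0 : V2 n), (0 : V2 n)) (p j₀, q j₀) = 1 := by
    rw [symp_stdBasis_zero_left]; exact hlead
  have hrange : Set.range (fun j => (p j, q j)) =
      insert (p j₀, q j₀) {x | ∃ j, j ≠ j₀ ∧ x = (p j, q j)} := by
    rw [← Set.insert_image_compl_eq_range _ j₀]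
    ext x
    simp [eq_comm]
  have hupdate : (Matrix.of fun j i => if j = j₀ then (0 : ZMod 2) else q j i) =
      (Matrix.of fun j i => q j i).updateRow j₀ 0 := by
    ext j i
    simp [Matrix.updateRow_apply]
  refine ⟨hperp, hpair, ?_, ?_⟩
  · rw [hrange] at hLag
    exact hLag.span_insert_replace hpair fun x ⟨j, hj, hx⟩ => hx ▸ hperp j hj
  · have hdrop := Matrix.rank_updateRow_zero_add_one (Matrix.of fun j i => q j i) j₀ k
      (by simp [hlead]) hcol
    rw [hupdate]
    omega

/-- If the check matrix is in reduced row echelon form with the leading one of the first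
row in position `k` of the `q`-part (so `q₁ k = 1` and `qⱼ k = 0` for `j ≠ 1`), and the
`q`-matrix has rank `r ≥ 1`, then `(e_k, 0)` has vanishing symplectic product with
`(pⱼ, qⱼ)` for `j ≠ 1` and product `1` with `(p₁, q₁)`; hence replacing `(p₁, q₁)` by
`(e_k, 0)` yields a Lagrangian subspace whose `q`-matrix has rank `r - 1`. -/
theorem splitting_replacement {n : ℕ} (hn : 0 < n) (p q : Fin n → V2 n)
    (hLag : IsLagrangian (Submodule.span (ZMod 2) (Set.range fun j => (p j, q j))))
    (k : Fin n) (r : ℕ) (hr : 1 ≤ r)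
    (hrank : (Matrix.of fun j i => q j i).rank = r)
    (hlead : q ⟨0, hn⟩ k = 1) (hcol : ∀ j, j ≠ ⟨0, hn⟩ → q j k = 0) :
    (∀ j, j ≠ ⟨0, hn⟩ →
      symp ((fun i => if i = k then 1 else 0 : V2 n), (0 : V2 n)) (p j, q j) = 0) ∧
    symp ((fun i => if i = k then 1 else 0 : V2 n), (0 : V2 n)) (p ⟨0, hn⟩, q ⟨0, hn⟩) = 1 ∧
    IsLagrangian (Submodule.span (ZMod 2)
      (insert ((fun i => if i = k then 1 else 0 : V2 n), (0 : V2 n))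
        {x | ∃ j, j ≠ ⟨0, hn⟩ ∧ x = (p j, q j)})) ∧
    (Matrix.of fun j i => if j = ⟨0, hn⟩ then (0 : ZMod 2) else q j i).rank = r - 1 :=
  splitting_replacement_general hn p q hLag k r hrank hlead hcol
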